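/- (Monotonicity of ζ under central restriction, used in Proposition 2.7.) Let χ_1 ≥ χ_2 ≥ ... ≥ χ_d be real numbers, and let 0 ≤ m and ℓ ≥ 1 with m + ℓ ≤ d. Then ζ(χ_{m+1}, ..., χ_{m+ℓ}) ≤ ζ(χ_1, ..., χ_d), where for a nonincreasing tuple (μ_1, ..., μ_k), ζ(μ) := Σ_{i=1}^{k−1}(μ_1+...+μ_i) − ((k−1)/2)(μ_1+...+μ_k). -/

import Mathlib

/-- Partial sums `σ_i(μ) = μ_1 + ⋯ + μ_i` of a (1-indexed) tuple. -/
noncomputable def sigmaT (μ : ℕ → ℝ) (i : ℕ) : ℝ := ∑ j ∈ Finset.Icc 1 i, μ j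

/-- `ζ` of a (1-indexed) tuple of length `k`:
`ζ(μ) = σ_1(μ) + ⋯ + σ_{k-1}(μ) - ((k-1)/2) σ_k(μ)`. -/
noncomputable def zetaT (k : ℕ) (μ : ℕ → ℝ) : ℝ :=
  (∑ i ∈ Finset.Ico 1 k, sigmaT μ i) - ((k - 1 : ℝ) / 2) * sigmaT μ k

/-! ζ is a combination `∑ i (k - i)/2 · (μ_i - μ_{i+1})` of the consecutive gaps of the tuple,
with nonnegative weights when the tuple is nonincreasing. For the central sub-tuple starting
after position `m`, the gap at position `j` carries the weight `(j - m)(m + ℓ - j)/2`, which is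
at most its weight `j (d - j)/2` in the full tuple; the remaining gaps of the full tuple only
add nonnegative terms. -/

open Finset

lemma sigmaT_succ (μ : ℕ → ℝ) (n : ℕ) : sigmaT μ (n + 1) = sigmaT μ n + μ (n + 1) :=
  sum_Icc_succ_top (Nat.le_add_left 1 n) μ

lemma sum_mul_sub_succ_eq_sigmaT (μ : ℕ → ℝ) (n : ℕ) :
    ∑ i ∈ Ico 1 (n + 1), (i : ℝ) * (μ i - μ (i + 1)) = sigmaT μ n - n * μ (n + 1) := by
  induction n with
  | zero => simp [sigmaT]
  | succ n ih =>
    rw [sum_Ico_succ_top (Nat.le_add_left 1 n), ih, sigmaT_succ]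
    push_cast
    ring

lemma zetaT_succ (μ : ℕ → ℝ) (k : ℕ) :
    zetaT (k + 1) μ = zetaT k μ + (sigmaT μ k - k * μ (k + 1)) / 2 := by
  rcases Nat.eq_zero_or_pos k with rfl | hk
  · simp [zetaT, sigmaT]
  · simp only [zetaT, sum_Ico_succ_top hk, sigmaT_succ]
    push_cast
    ring

lemma zetaT_eq_sum (k : ℕ) (μ : ℕ → ℝ) :
    zetaT k μ = ∑ i ∈ Ico 1 k, (i : ℝ) * (k - i) / 2 * (μ i - μ (i + 1)) := by
  induction k with
  | zero => simp [zetaT, sigmaT]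
  | succ k ih =>
    -- the weight `i (k + 1 - i)/2` is `i (k - i)/2 + i/2`, and the `i/2` part sums by parts
    have hsplit : ∑ i ∈ Ico 1 (k + 1), (i : ℝ) * (↑(k + 1) - i) / 2 * (μ i - μ (i + 1)) =
        ∑ i ∈ Ico 1 k, (i : ℝ) * (k - i) / 2 * (μ i - μ (i + 1)) +
          (∑ i ∈ Ico 1 (k + 1), (i : ℝ) * (μ i - μ (i + 1))) / 2 := by
      have hlast : ∑ i ∈ Ico 1 (k + 1), (i : ℝ) * (k - i) / 2 * (μ i - μ (i + 1)) =
          ∑ i ∈ Ico 1 k, (i : ℝ) * (k - i) / 2 * (μ i - μ (i + 1)) := by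
        rcases Nat.eq_zero_or_pos k with rfl | hk
        · simp
        · simp [sum_Ico_succ_top hk]
      rw [← hlast, sum_div, ← sum_add_distrib]
      refine sum_congr rfl fun i _ => ?_
      push_cast
      ring
    rw [hsplit, sum_mul_sub_succ_eq_sigmaT, ← ih, zetaT_succ]

lemma zetaT_add_left_eq_sum (ℓ m : ℕ) (χ : ℕ → ℝ) :
    zetaT ℓ (fun j => χ (m + j)) =
      ∑ j ∈ Ico (m + 1) (m + ℓ), ((j : ℝ) - m) * (m + ℓ - j) / 2 * (χ j - χ (j + 1)) := by
  rw [zetaT_eq_sum, ← map_add_left_Ico 1 ℓ m, sum_map]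
  refine sum_congr rfl fun i _ => ?_
  simp only [addLeftEmbedding_apply, Nat.cast_add, add_assoc]
  ring_nf

theorem zeta_subtuple_le_general (d m ℓ : ℕ) (hmd : m + ℓ ≤ d)
    (χ : ℕ → ℝ) (hχ : ∀ i, 1 ≤ i → i < d → χ (i + 1) ≤ χ i) :
    zetaT ℓ (fun j => χ (m + j)) ≤ zetaT d χ := by
  have hmd' : (m : ℝ) + ℓ ≤ d := by exact_mod_cast hmd
  have hgap : ∀ j ∈ Ico 1 d, 0 ≤ χ j - χ (j + 1) := fun j hj =>
    sub_nonneg.mpr (hχ j (mem_Ico.mp hj).1 (mem_Ico.mp hj).2)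
  have hsub : Ico (m + 1) (m + ℓ) ⊆ Ico 1 d := Ico_subset_Ico (by omega) hmd
  rw [zetaT_add_left_eq_sum, zetaT_eq_sum]
  calc ∑ j ∈ Ico (m + 1) (m + ℓ), ((j : ℝ) - m) * (m + ℓ - j) / 2 * (χ j - χ (j + 1))
      ≤ ∑ j ∈ Ico (m + 1) (m + ℓ), (j : ℝ) * (d - j) / 2 * (χ j - χ (j + 1)) := by
        refine sum_le_sum fun j hj => mul_le_mul_of_nonneg_right ?_ (hgap j (hsub hj))
        obtain ⟨hmj, hjℓ⟩ := mem_Ico.mp hj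
        have hmj' : (m : ℝ) + 1 ≤ j := by exact_mod_cast hmj
        have hjℓ' : (j : ℝ) + 1 ≤ m + ℓ := by exact_mod_cast hjℓ
        gcongr <;> linarith [(m.cast_nonneg : (0 : ℝ) ≤ m)]
    _ ≤ ∑ j ∈ Ico 1 d, (j : ℝ) * (d - j) / 2 * (χ j - χ (j + 1)) := by
        refine sum_le_sum_of_subset_of_nonneg hsub fun j hj _ => mul_nonneg ?_ (hgap j hj)
        have : (j : ℝ) + 1 ≤ d := by exact_mod_cast (mem_Ico.mp hj).2
        exact div_nonneg (mul_nonneg j.cast_nonneg (by linarith)) zero_le_two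

/-- monotonicity of `ζ` under central restriction: if
`χ_1 ≥ χ_2 ≥ ⋯ ≥ χ_d` and `m + ℓ ≤ d` with `ℓ ≥ 1`, then
`ζ(χ_{m+1}, …, χ_{m+ℓ}) ≤ ζ(χ_1, …, χ_d)`. -/
theorem zeta_subtuple_le (d m ℓ : ℕ) (hℓ : 1 ≤ ℓ) (hmd : m + ℓ ≤ d)
    (χ : ℕ → ℝ) (hχ : ∀ i, 1 ≤ i → i < d → χ (i + 1) ≤ χ i) :
    zetaT ℓ (fun j => χ (m + j)) ≤ zetaT d χ :=
  zeta_subtuple_le_general d m ℓ hmd χ hχ
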